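/- arXiv:1409.5333 — 4 statements merged into one kernel-verified Lean document; each statement's English description precedes it below -/
import Mathlib

section
/- Let M₀ > 0, Λ > 0 with 9·M₀²·Λ < 1, and let r_{BΛ} be the smallest positive zero of v_Λ(r) = 1 − r²Λ/3 − 2M₀/r. Then r_{BΛ} > 2M₀ and r_{BΛ} − 2M₀ ≤ r_{BΛ}⁴·Λ/(6M₀). -/
/-- If `r_{BΛ}` is the smallest positive zero of `1 − r²Λ/3 − 2M₀/r` (with `M₀ > 0`,
`Λ > 0`, `9M₀²Λ < 1`), then `r_{BΛ} > 2M₀` and `r_{BΛ} − 2M₀ ≤ r_{BΛ}⁴ Λ/(6M₀)`. -/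
theorem horizon_distance_estimate (M₀ Λ rB : ℝ) (hM : 0 < M₀) (hΛ : 0 < Λ)
    (h : 9 * M₀ ^ 2 * Λ < 1) (hrB : 0 < rB)
    (hroot : 1 - rB ^ 2 * Λ / 3 - 2 * M₀ / rB = 0)
    (hmin : ∀ r : ℝ, 0 < r → r < rB → 1 - r ^ 2 * Λ / 3 - 2 * M₀ / r ≠ 0) :
    2 * M₀ < rB ∧ rB - 2 * M₀ ≤ rB ^ 4 * Λ / (6 * M₀) := by
  have hne : rB ≠ 0 := ne_of_gt hrB
  have key : rB - rB ^ 3 * Λ / 3 - 2 * M₀ = 0 := by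
    field_simp at hroot
    nlinarith [hroot]
  have h1 : 2 * M₀ < rB := by nlinarith [pow_pos hrB 3]
  refine ⟨h1, ?_⟩
  rw [le_div_iff₀ (by positivity)]
  nlinarith [pow_pos hrB 3, mul_pos (pow_pos hrB 3) hΛ]
end

section
/- Let M₀ > 0 and L₀ > 16·M₀². The function a(r)² = (1 − 2M₀/r)·(1 + L₀/r²) on (2M₀, ∞) attains a local maximum at r̂ = (L₀ − √(L₀² − 12·M₀²·L₀))/(2M₀), and r̂ lies strictly between the two solutions r₋ < r₊ of a(r) = 1. -/
/-!
The derivative of `a(r)²` is `2 (M r² - L r + 3 M L) / r⁴`, whose numerator factors as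
`M (r - r̂) (r - r̂')` with `r̂ < r̂'` the two critical radii, so `a²` increases just below `r̂` and
decreases just above it. The equation `a(r) = 1` is the quadratic `2 M r² - L r + 2 M L = 0` with
roots `r₋ < r₊`; at `r̂` this quadratic equals `L (r̂ - 4 M)`, which is negative because
`L > 16 M²` forces `r̂ < 4 M`. Hence `r₋ < r̂ < r₊`.
-/

open Set

section Quadratic

variable {K : Type*} [Field K]

theorem quadratic_eq_mul_sub_mul_sub_of_discrim [NeZero (2 : K)] {a b c s : K} (ha : a ≠ 0)
    (hs : discrim a b c = s * s) (x : K) :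
    a * (x * x) + b * x + c = a * (x - (-b + s) / (2 * a)) * (x - (-b - s) / (2 * a)) := by
  rw [discrim] at hs
  field_simp
  linear_combination -hs

theorem quadratic_eq_mul_sub_mul_sub_of_roots {a b c x₁ x₂ : K} (hne : x₁ ≠ x₂)
    (h₁ : a * (x₁ * x₁) + b * x₁ + c = 0) (h₂ : a * (x₂ * x₂) + b * x₂ + c = 0) (x : K) :
    a * (x * x) + b * x + c = a * (x - x₁) * (x - x₂) := by
  have hb : b + a * (x₁ + x₂) = 0 := by
    have h : (x₁ - x₂) * (b + a * (x₁ + x₂)) = 0 := by linear_combination h₁ - h₂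
    exact (mul_eq_zero.mp h).resolve_left (sub_ne_zero.mpr hne)
  linear_combination h₁ + (x - x₁) * hb

theorem mem_Ioo_of_quadratic_neg [LinearOrder K] [IsStrictOrderedRing K] {a b c x₁ x₂ x : K}
    (ha : 0 < a) (h₁₂ : x₁ < x₂) (h₁ : a * (x₁ * x₁) + b * x₁ + c = 0)
    (h₂ : a * (x₂ * x₂) + b * x₂ + c = 0) (hx : a * (x * x) + b * x + c < 0) :
    x ∈ Ioo x₁ x₂ := by
  rw [quadratic_eq_mul_sub_mul_sub_of_roots h₁₂.ne h₁ h₂, mul_assoc] at hx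
  have hneg : (x - x₁) * (x - x₂) < 0 := neg_of_mul_neg_right hx ha.le
  constructor <;> nlinarith

end Quadratic

noncomputable def effectivePotential (M L r : ℝ) : ℝ := (1 - 2 * M / r) * (1 + L / r ^ 2)

noncomputable def criticalRadius (M L : ℝ) : ℝ := (L - √(L ^ 2 - 12 * M ^ 2 * L)) / (2 * M)

noncomputable def outerCriticalRadius (M L : ℝ) : ℝ := (L + √(L ^ 2 - 12 * M ^ 2 * L)) / (2 * M)

variable {M L : ℝ}

theorem hasDerivAt_effectivePotential {x : ℝ} (hx : x ≠ 0) :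
    HasDerivAt (effectivePotential M L) (2 * (M * (x * x) - L * x + 3 * M * L) / x ^ 4) x := by
  have h : HasDerivAt (fun r => (1 - 2 * M * r⁻¹) * (1 + L * (r ^ 2)⁻¹)) _ x :=
    (((hasDerivAt_inv hx).const_mul (2 * M)).const_sub 1).mul
      ((((hasDerivAt_pow 2 x).inv (pow_ne_zero 2 hx)).const_mul L).const_add 1)
  refine h.congr_deriv ?_
  field_simp
  ring

theorem effectivePotential_eq_one_iff {r : ℝ} (hr : r ≠ 0) :
    effectivePotential M L r = 1 ↔ 2 * M * (r * r) + -L * r + 2 * M * L = 0 := by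
  rw [effectivePotential]
  field_simp
  constructor <;> intro h <;> linear_combination -h

theorem effectivePotential_eq_one_of_sqrt_mul_sqrt {r : ℝ} (hr : 0 < r) (hMr : 2 * M ≤ r)
    (h : √(1 - 2 * M / r) * √(1 + L / r ^ 2) = 1) : effectivePotential M L r = 1 := by
  have hnonneg : 0 ≤ 1 - 2 * M / r := by rw [sub_nonneg, div_le_one hr]; exact hMr
  rwa [← Real.sqrt_mul hnonneg, Real.sqrt_eq_one] at h

theorem mul_self_sub_mul_add_eq_mul_sub_criticalRadius (hM : M ≠ 0)
    (hD : 0 ≤ L ^ 2 - 12 * M ^ 2 * L) (x : ℝ) :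
    M * (x * x) - L * x + 3 * M * L =
      M * (x - criticalRadius M L) * (x - outerCriticalRadius M L) := by
  have hdiscrim :
      discrim M (-L) (3 * M * L) = √(L ^ 2 - 12 * M ^ 2 * L) * √(L ^ 2 - 12 * M ^ 2 * L) := by
    rw [discrim, Real.mul_self_sqrt hD]; ring
  rw [criticalRadius, outerCriticalRadius]
  linear_combination quadratic_eq_mul_sub_mul_sub_of_discrim hM hdiscrim x

theorem criticalRadius_pos (hM : 0 < M) (hL : 12 * M ^ 2 < L) : 0 < criticalRadius M L := by
  have hL0 : 0 < L := by nlinarith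
  have hsqrt : √(L ^ 2 - 12 * M ^ 2 * L) < L := by
    rw [Real.sqrt_lt' hL0]; nlinarith [mul_pos (pow_pos hM 2) hL0]
  exact div_pos (by linarith) (by positivity)

theorem criticalRadius_lt_outerCriticalRadius (hM : 0 < M) (hD : 0 < L ^ 2 - 12 * M ^ 2 * L) :
    criticalRadius M L < outerCriticalRadius M L := by
  have hsqrt := Real.sqrt_pos.mpr hD
  exact div_lt_div_of_pos_right (by linarith) (by positivity)

theorem criticalRadius_lt_four_mul (hM : 0 < M) (hL : 16 * M ^ 2 < L) :
    criticalRadius M L < 4 * M := by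
  rw [criticalRadius, div_lt_iff₀ (by positivity), sub_lt_comm, Real.lt_sqrt (by nlinarith)]
  nlinarith [mul_lt_mul_of_pos_left hL (pow_pos hM 2)]

theorem isLocalMax_effectivePotential_criticalRadius (hM : 0 < M) (hL : 12 * M ^ 2 < L) :
    IsLocalMax (effectivePotential M L) (criticalRadius M L) := by
  set r := criticalRadius M L
  set r' := outerCriticalRadius M L
  have hr : 0 < r := criticalRadius_pos hM hL
  have hD : 0 < L ^ 2 - 12 * M ^ 2 * L := by nlinarith
  have hrr' : r < r' := criticalRadius_lt_outerCriticalRadius hM hD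
  have hderiv (x : ℝ) (hx : 0 < x) :
      deriv (effectivePotential M L) x = 2 * (M * (x - r) * (x - r')) / x ^ 4 := by
    rw [(hasDerivAt_effectivePotential hx.ne').deriv,
      mul_self_sub_mul_add_eq_mul_sub_criticalRadius hM.ne' hD.le]
  have hdiff : DifferentiableOn ℝ (effectivePotential M L) (Ioi 0) := fun x hx =>
    (hasDerivAt_effectivePotential (ne_of_gt hx)).differentiableAt.differentiableWithinAt
  refine isLocalMax_of_deriv_Ioo (half_lt_self hr) hrr'
    (hasDerivAt_effectivePotential hr.ne').continuousAt
    (hdiff.mono fun x hx => (half_pos hr).trans hx.1) (hdiff.mono fun x hx => hr.trans hx.1) ?_ ?_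
  · rintro x ⟨hx, hxr⟩
    rw [hderiv x ((half_pos hr).trans hx)]
    have : 0 ≤ M * (x - r) * (x - r') :=
      mul_nonneg_of_nonpos_of_nonpos (mul_nonpos_of_nonneg_of_nonpos hM.le (by linarith))
        (by linarith)
    positivity
  · rintro x ⟨hrx, hxr'⟩
    rw [hderiv x (hr.trans hrx)]
    have : M * (x - r) * (x - r') ≤ 0 :=
      mul_nonpos_of_nonneg_of_nonpos (mul_nonneg hM.le (by linarith)) (by linarith)
    exact div_nonpos_of_nonpos_of_nonneg (by linarith) (by positivity)

theorem criticalRadius_mem_Ioo {rm rp : ℝ} (hM : 0 < M) (hL : 16 * M ^ 2 < L) (hrm : 0 < rm)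
    (hrmp : rm < rp) (ham : effectivePotential M L rm = 1) (hap : effectivePotential M L rp = 1) :
    criticalRadius M L ∈ Ioo rm rp := by
  set r := criticalRadius M L
  have hL0 : 0 < L := by nlinarith
  have hcritical : M * (r * r) - L * r + 3 * M * L = 0 := by
    rw [mul_self_sub_mul_add_eq_mul_sub_criticalRadius hM.ne' (by nlinarith)]; ring
  have hr4 : L * r < L * (4 * M) := mul_lt_mul_of_pos_left (criticalRadius_lt_four_mul hM hL) hL0
  refine mem_Ioo_of_quadratic_neg (by positivity) hrmp
    ((effectivePotential_eq_one_iff hrm.ne').mp ham)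
    ((effectivePotential_eq_one_iff (hrm.trans hrmp).ne').mp hap) ?_
  linarith

/-- For `M₀ > 0`, `L₀ > 16M₀²`, the function `a² = (1 − 2M₀/r)(1 + L₀/r²)` attains a
local maximum at `r̂ = (L₀ − √(L₀² − 12M₀²L₀))/(2M₀)`, which lies strictly between the
two solutions `r₋ < r₊` of `a(r) = 1`. -/
theorem effective_potential_local_max (M₀ L₀ rm rp : ℝ) (hM : 0 < M₀)
    (hL : 16 * M₀ ^ 2 < L₀) (hrm : 2 * M₀ < rm) (hrmp : rm < rp)
    (ham : Real.sqrt (1 - 2 * M₀ / rm) * Real.sqrt (1 + L₀ / rm ^ 2) = 1)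
    (hap : Real.sqrt (1 - 2 * M₀ / rp) * Real.sqrt (1 + L₀ / rp ^ 2) = 1) :
    IsLocalMax (fun r : ℝ => (1 - 2 * M₀ / r) * (1 + L₀ / r ^ 2))
      ((L₀ - Real.sqrt (L₀ ^ 2 - 12 * M₀ ^ 2 * L₀)) / (2 * M₀)) ∧
    rm < (L₀ - Real.sqrt (L₀ ^ 2 - 12 * M₀ ^ 2 * L₀)) / (2 * M₀) ∧
    (L₀ - Real.sqrt (L₀ ^ 2 - 12 * M₀ ^ 2 * L₀)) / (2 * M₀) < rp := by
  have hm := effectivePotential_eq_one_of_sqrt_mul_sqrt (by linarith) hrm.le ham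
  have hp := effectivePotential_eq_one_of_sqrt_mul_sqrt (by linarith) (hrm.trans hrmp).le hap
  exact ⟨isLocalMax_effectivePotential_criticalRadius hM (by nlinarith),
    criticalRadius_mem_Ioo hM hL (by linarith) hrmp hm hp⟩
end

section
/- Let x, y : [β₀, β₁) → ℝ be C¹ functions with 0 ≤ x < 1 and y ≥ 0, and define w(x, y) = (3(1 − x) + 1 + y)²/(1 − x). Suppose along the curve the inequality (3x − 2 + y)·ẋ + 2(1 − x)·ẏ ≤ −α(x,y)/2 holds, where α(x,y) = 3x² − 2x + y² + 2y, and suppose w(x(β₀), y(β₀)) ≤ 16. Then w(x(β), y(β)) ≤ 16 for all β ∈ [β₀, β₁). In particular x(β) ≤ 8/9 whenever y(β) ≥ 0. -/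
/-!
The quantity `w(x, y) = (4 - 3x + y)² / (1 - x)` satisfies
`ẇ = (4 - 3x + y) / (1 - x)² · ((3x - 2 + y) ẋ + 2 (1 - x) ẏ)`, so along the curve
`ẇ ≤ -(4 - 3x + y) α / (2 (1 - x)²)`. The identity `4α = (1 - x)(w - 16) + 3(x + y)²` shows that
`α ≥ 0` wherever `w ≥ 16`, so `w` cannot increase while it is at or above `16`; starting below `16`
it therefore stays there. Finally `(4 - 3x)² ≤ (4 - 3x + y)² ≤ 16 (1 - x)` gives `9x² ≤ 8x`.
-/

open Set Filter Topology

theorem image_le_of_hasDerivAt_nonpos_above {f f' : ℝ → ℝ} {a b c : ℝ}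
    (hf : ∀ t ∈ Ico a b, HasDerivAt f (f' t) t) (ha : f a ≤ c)
    (hf' : ∀ t ∈ Ico a b, c ≤ f t → f' t ≤ 0) : ∀ t ∈ Ico a b, f t ≤ c := by
  intro t ht
  have hsub : Icc a t ⊆ Ico a b := Icc_subset_Ico_right ht.2
  -- Fence `f` by the strictly increasing barriers `c + ε (s - a)`, then let `ε → 0`.
  have hfence : ∀ ε > 0, f t ≤ c + ε * (t - a) := fun ε hε =>
    image_le_of_deriv_right_lt_deriv_boundary (B := fun s => c + ε * (s - a)) (B' := fun _ => ε)
      (fun s hs => (hf s (hsub hs)).continuousAt.continuousWithinAt)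
      (fun s hs => (hf s (hsub (Ico_subset_Icc_self hs))).hasDerivWithinAt)
      (by simpa using ha)
      (fun s => by simpa using (((hasDerivAt_id s).sub_const a).const_mul ε).const_add c)
      (fun s hs hfs => (hf' s (hsub (Ico_subset_Icc_self hs))
        (hfs ▸ le_add_of_nonneg_right (mul_nonneg hε.le (sub_nonneg.2 hs.1)))).trans_lt hε)
      ⟨ht.1, le_rfl⟩
  have hlim : Tendsto (fun ε => c + ε * (t - a)) (𝓝[>] 0) (𝓝 c) := by
    apply tendsto_nhdsWithin_of_tendsto_nhds
    simpa using ((continuous_id.mul continuous_const).const_add c).tendsto' 0 c (by simp)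
  exact ge_of_tendsto hlim (eventually_nhdsWithin_of_forall hfence)

noncomputable def buchdahlW (x y : ℝ) : ℝ := (3 * (1 - x) + 1 + y) ^ 2 / (1 - x)

def buchdahlAlpha (x y : ℝ) : ℝ := 3 * x ^ 2 - 2 * x + y ^ 2 + 2 * y

theorem hasDerivAt_buchdahlW {x y : ℝ → ℝ} {x' y' t : ℝ} (hx : HasDerivAt x x' t)
    (hy : HasDerivAt y y' t) (hx1 : x t ≠ 1) :
    HasDerivAt (fun s => buchdahlW (x s) (y s))
      ((3 * (1 - x t) + 1 + y t) / (1 - x t) ^ 2 *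
        ((3 * x t - 2 + y t) * x' + 2 * (1 - x t) * y')) t := by
  have hu : HasDerivAt (fun s => 1 - x s) (-x') t := hx.const_sub 1
  have hN : HasDerivAt (fun s => 3 * (1 - x s) + 1 + y s) (3 * -x' + y') t :=
    ((hu.const_mul 3).add_const 1).add hy
  have hu0 : 1 - x t ≠ 0 := sub_ne_zero.2 hx1.symm
  refine ((hN.pow 2).div hu hu0).congr_deriv ?_
  simp only [Pi.pow_apply]
  field_simp
  ring

theorem four_mul_buchdahlAlpha {x : ℝ} (y : ℝ) (hx : x ≠ 1) :
    4 * buchdahlAlpha x y = (1 - x) * (buchdahlW x y - 16) + 3 * (x + y) ^ 2 := by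
  have : 1 - x ≠ 0 := sub_ne_zero.2 hx.symm
  unfold buchdahlAlpha buchdahlW
  field_simp
  ring

theorem buchdahlAlpha_nonneg {x y : ℝ} (hx : x < 1) (hw : 16 ≤ buchdahlW x y) :
    0 ≤ buchdahlAlpha x y := by
  have := four_mul_buchdahlAlpha y hx.ne
  nlinarith [mul_nonneg (sub_nonneg.2 hx.le) (sub_nonneg.2 hw), sq_nonneg (x + y)]

theorem le_eight_ninths_of_buchdahlW_le {x y : ℝ} (hx : x < 1) (hy : 0 ≤ y)
    (hw : buchdahlW x y ≤ 16) : x ≤ 8 / 9 := by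
  have hsq : (3 * (1 - x) + 1 + y) ^ 2 ≤ 16 * (1 - x) :=
    (div_le_iff₀ (sub_pos.2 hx)).1 hw
  nlinarith

theorem buchdahl_monotonicity_general (β₀ β₁ : ℝ) (x y : ℝ → ℝ)
    (hx : ∀ β ∈ Set.Ico β₀ β₁, DifferentiableAt ℝ x β)
    (hy : ∀ β ∈ Set.Ico β₀ β₁, DifferentiableAt ℝ y β)
    (hx01 : ∀ β ∈ Set.Ico β₀ β₁, 0 ≤ x β ∧ x β < 1)
    (hy0 : ∀ β ∈ Set.Ico β₀ β₁, 0 ≤ y β)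
    (hineq : ∀ β ∈ Set.Ico β₀ β₁,
      (3 * x β - 2 + y β) * deriv x β + 2 * (1 - x β) * deriv y β
        ≤ -(3 * (x β) ^ 2 - 2 * x β + (y β) ^ 2 + 2 * y β) / 2)
    (hinit : (3 * (1 - x β₀) + 1 + y β₀) ^ 2 / (1 - x β₀) ≤ 16) :
    ∀ β ∈ Set.Ico β₀ β₁,
      (3 * (1 - x β) + 1 + y β) ^ 2 / (1 - x β) ≤ 16 ∧ x β ≤ 8 / 9 := by
  have hw : ∀ β ∈ Ico β₀ β₁, buchdahlW (x β) (y β) ≤ 16 := by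
    refine image_le_of_hasDerivAt_nonpos_above (fun β hβ => hasDerivAt_buchdahlW
      (hx β hβ).hasDerivAt (hy β hβ).hasDerivAt (hx01 β hβ).2.ne) hinit fun β hβ h16 => ?_
    obtain ⟨-, hx1⟩ := hx01 β hβ
    have hc : 0 ≤ (3 * (1 - x β) + 1 + y β) / (1 - x β) ^ 2 :=
      div_nonneg (by linarith [hy0 β hβ]) (sq_nonneg _)
    have hα : 0 ≤ buchdahlAlpha (x β) (y β) := buchdahlAlpha_nonneg hx1 h16
    unfold buchdahlAlpha at hα
    exact mul_nonpos_of_nonneg_of_nonpos hc ((hineq β hβ).trans (by linarith))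
  exact fun β hβ => ⟨hw β hβ, le_eight_ninths_of_buchdahlW_le (hx01 β hβ).2 (hy0 β hβ) (hw β hβ)⟩

/-- Monotonicity core of the Buchdahl inequality: along a curve `(x, y)` with
`0 ≤ x < 1`, `y ≥ 0`, satisfying `(3x − 2 + y)ẋ + 2(1 − x)ẏ ≤ −α(x,y)/2` with
`α = 3x² − 2x + y² + 2y`, the quantity `w = (3(1−x)+1+y)²/(1−x)` stays `≤ 16` if it
starts `≤ 16`; in particular `x ≤ 8/9`. -/
theorem buchdahl_monotonicity (β₀ β₁ : ℝ) (x y : ℝ → ℝ)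
    (hx : ∀ β ∈ Set.Ico β₀ β₁, DifferentiableAt ℝ x β)
    (hy : ∀ β ∈ Set.Ico β₀ β₁, DifferentiableAt ℝ y β)
    (hx01 : ∀ β ∈ Set.Ico β₀ β₁, 0 ≤ x β ∧ x β < 1)
    (hy0 : ∀ β ∈ Set.Ico β₀ β₁, 0 ≤ y β)
    (hineq : ∀ β ∈ Set.Ico β₀ β₁,
      (3 * x β - 2 + y β) * deriv x β + 2 * (1 - x β) * deriv y β
        ≤ -(3 * (x β) ^ 2 - 2 * x β + (y β) ^ 2 + 2 * y β) / 2)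
    (hβ₀ : β₀ < β₁)
    (hinit : (3 * (1 - x β₀) + 1 + y β₀) ^ 2 / (1 - x β₀) ≤ 16) :
    ∀ β ∈ Set.Ico β₀ β₁,
      (3 * (1 - x β) + 1 + y β) ^ 2 / (1 - x β) ≤ 16 ∧ x β ≤ 8 / 9 :=
  buchdahl_monotonicity_general β₀ β₁ x y hx hy hx01 hy0 hineq hinit
end

section
/- Let Λ > 0, M > 0 with 9M²Λ < 1, and let r_{BΛ} < r_C be the two positive roots of 1 − r²Λ/3 − 2M/r = 0. Then Λ·r_C² > 1 and Λ·r_{BΛ}² < 1; consequently δ_C = r_C/(Λr_C² − 1) > 0, δ_B = r_{BΛ}/(1 − Λr_{BΛ}²) > 0, and γ = r_{BΛ}/((1 − Λr_{BΛ}²)·δ_C) satisfies 0 < γ < 1 while β = r_C/((Λr_C² − 1)·δ_B) satisfies β > 1. -/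
/-- Sign conditions on the surface-gravity constants `δ_B, δ_C` and the exponents
`β > 1`, `0 < γ < 1` for the Kruskal-type extension of Schwarzschild–deSitter. -/
theorem sdS_exponents (M Λ rb rc : ℝ) (hM : 0 < M) (hΛ : 0 < Λ)
    (h : 9 * M ^ 2 * Λ < 1) (hb : 0 < rb) (hbc : rb < rc)
    (hrb : 1 - rb ^ 2 * Λ / 3 - 2 * M / rb = 0)
    (hrc : 1 - rc ^ 2 * Λ / 3 - 2 * M / rc = 0) :
    1 < Λ * rc ^ 2 ∧ Λ * rb ^ 2 < 1 ∧
    0 < rc / (Λ * rc ^ 2 - 1) ∧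
    0 < rb / (1 - Λ * rb ^ 2) ∧
    (0 < rb / ((1 - Λ * rb ^ 2) * (rc / (Λ * rc ^ 2 - 1))) ∧
      rb / ((1 - Λ * rb ^ 2) * (rc / (Λ * rc ^ 2 - 1))) < 1) ∧
    1 < rc / ((Λ * rc ^ 2 - 1) * (rb / (1 - Λ * rb ^ 2))) := by
  have hc : 0 < rc := hb.trans hbc
  have hbne : rb ≠ 0 := hb.ne'
  have hcne : rc ≠ 0 := hc.ne'
  have h1 : rb - rb ^ 3 * Λ / 3 - 2 * M = 0 := by
    have := hrb
    field_simp at this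
    linarith
  have h2 : rc - rc ^ 3 * Λ / 3 - 2 * M = 0 := by
    have := hrc
    field_simp at this
    linarith
  have key : Λ * (rb ^ 2 + rb * rc + rc ^ 2) = 3 := by
    have hne : rc - rb ≠ 0 := sub_ne_zero.mpr hbc.ne'
    have h3 : (rc - rb) * (Λ * (rb ^ 2 + rb * rc + rc ^ 2) - 3) = 0 := by ring_nf; nlinarith [h1, h2]
    rcases mul_eq_zero.mp h3 with h4 | h4
    · exact absurd h4 hne
    · linarith
  have hc1 : 1 < Λ * rc ^ 2 := by nlinarith [mul_pos hΛ (mul_pos (sub_pos.mpr hbc) (by linarith : (0:ℝ) < 2 * rc + rb))]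
  have hb1 : Λ * rb ^ 2 < 1 := by nlinarith [mul_pos hΛ (mul_pos (sub_pos.mpr hbc) (by linarith : (0:ℝ) < rc + 2 * rb))]
  have hprod : Λ * rb * rc < 1 := by nlinarith [mul_pos hΛ (mul_pos (sub_pos.mpr hbc) (sub_pos.mpr hbc))]
  have hcd : 0 < Λ * rc ^ 2 - 1 := by linarith
  have hbd : 0 < 1 - Λ * rb ^ 2 := by linarith
  have hdC : 0 < rc / (Λ * rc ^ 2 - 1) := div_pos hc hcd
  have hdB : 0 < rb / (1 - Λ * rb ^ 2) := div_pos hb hbd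
  have hkey2 : rb * (Λ * rc ^ 2 - 1) < (1 - Λ * rb ^ 2) * rc := by nlinarith
  refine ⟨hc1, hb1, hdC, hdB, ⟨div_pos hb (mul_pos hbd hdC), ?_⟩, ?_⟩
  · rw [div_lt_one (mul_pos hbd hdC), mul_div_assoc', lt_div_iff₀ hcd]
    linarith
  · rw [lt_div_iff₀ (mul_pos hcd hdB), one_mul, ← mul_div_assoc, div_lt_iff₀ hbd]
    nlinarith
end
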